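/- arXiv:1202.2028 — 4 statements merged into one kernel-verified Lean document; each statement's English description precedes it below -/
import Mathlib

section
/- Let a and b be (possibly unbounded) operators on a Hilbert space H with vectors Φ_0, η_0 satisfying aΦ_0 = 0, b†η_0 = 0, Φ_0 ∈ D^∞(b), η_0 ∈ D^∞(a†). Define Φ_n = (ε_n!)^{-1/2} b^n Φ_0 and η_n = (ε_n!)^{-1/2} (a†)^n η_0 where 0 = ε_0 < ε_1 < ε_2 < ⋯ and ε_n! = ε_1⋯ε_n. If a Φ_n = √ε_n Φ_{n-1} and b† η_n = √ε_n η_{n-1} for all n ≥ 1, and ⟨Φ_0, η_0⟩ = 1, then ⟨Φ_n, η_m⟩ = δ_{nm} for all n, m ≥ 0. -/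
local notation "⟪" x ", " y "⟫" => @inner ℂ _ _ x y

/-!
Write `Φ n` and `η n` as normalized orbits of `Φ₀` under `b` and of `η₀` under `a†`, so that
`Φ (n+1) = ε_{n+1}^{-1/2} b Φ n` and `η (m+1) = ε_{m+1}^{-1/2} a† η m`. Moving `a†` across the inner
product and lowering with `a Φ (n+1) = √ε_{n+1} Φ n` gives
`⟨Φ (n+1), η (m+1)⟩ = √(ε_{n+1} / ε_{m+1}) ⟨Φ n, η m⟩`, so by induction everything reduces to the
boundary values `⟨Φ 0, η m⟩` and `⟨Φ n, η 0⟩`, which vanish off `n = m = 0` because `a Φ₀ = 0` and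
`b† η₀ = 0`.
-/

section NormalizedOrbit

variable {E : Type*} [AddCommGroup E] [Module ℂ E]

/-- `(ε_n!)^{-1/2} Tⁿ v`, with `ε_n! = ε₁ ⋯ ε_n`. -/
noncomputable def normalizedOrbit (T : E →ₗ[ℂ] E) (ε : ℕ → ℝ) (v : E) (n : ℕ) : E :=
  ((Real.sqrt (∏ k ∈ Finset.range n, ε (k + 1)) : ℂ))⁻¹ • (T ^ n) v

@[simp]
lemma normalizedOrbit_zero (T : E →ₗ[ℂ] E) (ε : ℕ → ℝ) (v : E) :
    normalizedOrbit T ε v 0 = v := by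
  simp [normalizedOrbit]

lemma normalizedOrbit_succ (T : E →ₗ[ℂ] E) {ε : ℕ → ℝ} (v : E) {n : ℕ} (hε : 0 ≤ ε (n + 1)) :
    normalizedOrbit T ε v (n + 1) =
      ((Real.sqrt (ε (n + 1)) : ℂ))⁻¹ • T (normalizedOrbit T ε v n) := by
  rw [normalizedOrbit, normalizedOrbit, Finset.prod_range_succ, Real.sqrt_mul' _ hε, pow_succ',
    Module.End.mul_apply, map_smul, smul_smul, Complex.ofReal_mul, mul_inv, mul_comm]

end NormalizedOrbit

section Biorthogonality

variable {H : Type*} [NormedAddCommGroup H] [InnerProductSpace ℂ H] {ε : ℕ → ℝ}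

lemma inner_normalizedOrbit_succ_eq_zero {a ad : H →ₗ[ℂ] H}
    (hadj : ∀ x y : H, ⟪a x, y⟫ = ⟪x, ad y⟫) {x : H} (hx : a x = 0) (y : H) {m : ℕ}
    (hε : 0 ≤ ε (m + 1)) :
    ⟪x, normalizedOrbit ad ε y (m + 1)⟫ = 0 := by
  rw [normalizedOrbit_succ ad y hε, inner_smul_right, ← hadj, hx, inner_zero_left, mul_zero]

lemma inner_normalizedOrbit_succ_left_eq_zero {b bd : H →ₗ[ℂ] H}
    (hadj : ∀ x y : H, ⟪b x, y⟫ = ⟪x, bd y⟫) (x : H) {y : H} (hy : bd y = 0) {n : ℕ}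
    (hε : 0 ≤ ε (n + 1)) :
    ⟪normalizedOrbit b ε x (n + 1), y⟫ = 0 := by
  rw [normalizedOrbit_succ b x hε, inner_smul_left, hadj, hy, inner_zero_right, mul_zero]

lemma inner_normalizedOrbit_succ_of_apply_eq_smul {a ad : H →ₗ[ℂ] H}
    (hadj : ∀ x y : H, ⟪a x, y⟫ = ⟪x, ad y⟫) {x x' : H} {s : ℝ} (hx : a x = (s : ℂ) • x')
    (y : H) {m : ℕ} (hε : 0 ≤ ε (m + 1)) :
    ⟪x, normalizedOrbit ad ε y (m + 1)⟫ =
      ((s / Real.sqrt (ε (m + 1)) : ℝ) : ℂ) * ⟪x', normalizedOrbit ad ε y m⟫ := by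
  rw [normalizedOrbit_succ ad y hε, inner_smul_right, ← hadj, hx, inner_smul_left,
    Complex.conj_ofReal, ← mul_assoc, Complex.ofReal_div, div_eq_inv_mul]

theorem inner_normalizedOrbit_eq_ite {a b ad bd : H →ₗ[ℂ] H}
    (hadja : ∀ x y : H, ⟪a x, y⟫ = ⟪x, ad y⟫) (hadjb : ∀ x y : H, ⟪b x, y⟫ = ⟪x, bd y⟫)
    (hε : ∀ k, 0 < ε (k + 1)) {Φ0 η0 : H} (haΦ0 : a Φ0 = 0) (hbdη0 : bd η0 = 0)
    (hlow : ∀ n, a (normalizedOrbit b ε Φ0 (n + 1)) =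
      (Real.sqrt (ε (n + 1)) : ℂ) • normalizedOrbit b ε Φ0 n)
    (hnorm : ⟪Φ0, η0⟫ = 1) (n m : ℕ) :
    ⟪normalizedOrbit b ε Φ0 n, normalizedOrbit ad ε η0 m⟫ = if n = m then 1 else 0 := by
  induction n generalizing m with
  | zero =>
    cases m with
    | zero => simpa using hnorm
    | succ m =>
      simpa using inner_normalizedOrbit_succ_eq_zero hadja haΦ0 η0 (hε m).le
  | succ n ih =>
    cases m with
    | zero =>
      simpa using inner_normalizedOrbit_succ_left_eq_zero hadjb Φ0 hbdη0 (hε n).le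
    | succ m =>
      rw [inner_normalizedOrbit_succ_of_apply_eq_smul hadja (hlow n) η0 (hε m).le, ih m]
      by_cases hnm : n = m
      · subst hnm
        simp [div_self (Real.sqrt_pos.mpr (hε n)).ne']
      · simp [hnm]

end Biorthogonality

theorem stmt1_general {H : Type*} [NormedAddCommGroup H] [InnerProductSpace ℂ H]
    (a b ad bd : H →ₗ[ℂ] H)
    (hadja : ∀ x y : H, ⟪a x, y⟫ = ⟪x, ad y⟫)
    (hadjb : ∀ x y : H, ⟪b x, y⟫ = ⟪x, bd y⟫)
    (ε : ℕ → ℝ) (hε0 : ε 0 = 0) (hmono : StrictMono ε)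
    (Φ0 η0 : H) (haΦ0 : a Φ0 = 0) (hbdη0 : bd η0 = 0)
    (Φ η : ℕ → H)
    (hΦ : ∀ n : ℕ, Φ n =
      ((Real.sqrt (∏ k ∈ Finset.range n, ε (k + 1)) : ℂ))⁻¹ • (b ^ n) Φ0)
    (hη : ∀ n : ℕ, η n =
      ((Real.sqrt (∏ k ∈ Finset.range n, ε (k + 1)) : ℂ))⁻¹ • (ad ^ n) η0)
    (hlow : ∀ n : ℕ, 1 ≤ n → a (Φ n) = (Real.sqrt (ε n) : ℂ) • Φ (n - 1))
    (hnorm : ⟪Φ0, η0⟫ = 1) :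
    ∀ n m : ℕ, ⟪Φ n, η m⟫ = if n = m then (1 : ℂ) else 0 := by
  obtain rfl : Φ = normalizedOrbit b ε Φ0 := funext hΦ
  obtain rfl : η = normalizedOrbit ad ε η0 := funext hη
  have hε : ∀ k, 0 < ε (k + 1) := fun k => hε0 ▸ hmono k.succ_pos
  exact inner_normalizedOrbit_eq_ite hadja hadjb hε haΦ0 hbdη0
    (fun n => hlow (n + 1) n.succ_pos) hnorm

/-- NLPB biorthogonality: with `Φ n = (ε_n!)^{-1/2} b^n Φ₀`,
`η n = (ε_n!)^{-1/2} (a†)^n η₀`, the ladder relations and `⟨Φ₀, η₀⟩ = 1`,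
one has `⟨Φ n, η m⟩ = δ_{nm}`. -/
theorem stmt1 {H : Type*} [NormedAddCommGroup H] [InnerProductSpace ℂ H]
    [CompleteSpace H] (a b ad bd : H →ₗ[ℂ] H)
    (hadja : ∀ x y : H, ⟪a x, y⟫ = ⟪x, ad y⟫)
    (hadjb : ∀ x y : H, ⟪b x, y⟫ = ⟪x, bd y⟫)
    (ε : ℕ → ℝ) (hε0 : ε 0 = 0) (hmono : StrictMono ε)
    (Φ0 η0 : H) (haΦ0 : a Φ0 = 0) (hbdη0 : bd η0 = 0)
    (Φ η : ℕ → H)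
    (hΦ : ∀ n : ℕ, Φ n =
      ((Real.sqrt (∏ k ∈ Finset.range n, ε (k + 1)) : ℂ))⁻¹ • (b ^ n) Φ0)
    (hη : ∀ n : ℕ, η n =
      ((Real.sqrt (∏ k ∈ Finset.range n, ε (k + 1)) : ℂ))⁻¹ • (ad ^ n) η0)
    (hlow : ∀ n : ℕ, 1 ≤ n → a (Φ n) = (Real.sqrt (ε n) : ℂ) • Φ (n - 1))
    (hlow' : ∀ n : ℕ, 1 ≤ n → bd (η n) = (Real.sqrt (ε n) : ℂ) • η (n - 1))
    (hnorm : ⟪Φ0, η0⟫ = 1) :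
    ∀ n m : ℕ, ⟪Φ n, η m⟫ = if n = m then (1 : ℂ) else 0 :=
  stmt1_general a b ad bd hadja hadjb ε hε0 hmono Φ0 η0 haΦ0 hbdη0 Φ η hΦ hη hlow hnorm
end

section
/- With S_Φ and S_η as above, S_η = S_Φ^{-1} in the following sense: if f ∈ D(S_η) then S_η f ∈ D(S_Φ) and S_Φ(S_η f) = f; and if h ∈ D(S_Φ) then S_Φ h ∈ D(S_η) and S_η(S_Φ h) = h. -/
local notation "⟪" x ", " y "⟫" => @inner ℂ _ _ x y

/-- `S_η = S_Φ⁻¹`: if `f` lies in the (graph-closure) domain of `S_η`, with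
`f = Σ ⟨η n, f⟩ Φ n` and `S_η f = Σ ⟨η n, f⟩ η n`, then `S_η f ∈ D(S_Φ)` with
`S_Φ (S_η f) = f`, and symmetrically. -/
theorem stmt7 {H : Type*} [NormedAddCommGroup H] [InnerProductSpace ℂ H]
    [CompleteSpace H] (Φ η : ℕ → H)
    (hbo : ∀ n m : ℕ, ⟪Φ n, η m⟫ = if n = m then (1 : ℂ) else 0)
    (hdenseΦ : Dense ((Submodule.span ℂ (Set.range Φ) : Submodule ℂ H) : Set H))
    (hdenseη : Dense ((Submodule.span ℂ (Set.range η) : Submodule ℂ H) : Set H)) :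
    (∀ f Sf : H,
      HasSum (fun n : ℕ => ⟪η n, f⟫ • Φ n) f →
      HasSum (fun n : ℕ => ⟪η n, f⟫ • η n) Sf →
      HasSum (fun n : ℕ => ⟪Φ n, Sf⟫ • Φ n) f) ∧
    (∀ h Sh : H,
      HasSum (fun n : ℕ => ⟪Φ n, h⟫ • η n) h →
      HasSum (fun n : ℕ => ⟪Φ n, h⟫ • Φ n) Sh →
      HasSum (fun n : ℕ => ⟪η n, Sh⟫ • η n) h) := by
  have hbo' : ∀ n m : ℕ, ⟪η n, Φ m⟫ = if n = m then (1 : ℂ) else 0 := by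
    intro n m
    have := congrArg (starRingEnd ℂ) (hbo m n)
    rw [← inner_conj_symm] at this
    simpa [eq_comm, apply_ite (starRingEnd ℂ)] using this
  constructor
  · intro f Sf hf hSf
    have key : ∀ n : ℕ, ⟪Φ n, Sf⟫ = ⟪η n, f⟫ := by
      intro n
      have h1 : HasSum (fun m : ℕ => ⟪η m, f⟫ * ⟪Φ n, η m⟫) ⟪Φ n, Sf⟫ := by
        simpa [inner_smul_right] using (innerSL ℂ (Φ n)).hasSum hSf
      have h2 : HasSum (fun m : ℕ => ⟪η m, f⟫ * ⟪Φ n, η m⟫) ⟪η n, f⟫ := by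
        have := hasSum_ite_eq n (⟪η n, f⟫ : ℂ)
        refine this.congr_fun fun m => ?_
        rw [hbo]
        by_cases h : n = m
        · subst h; simp
        · simp [h, Ne.symm h]
      exact h1.unique h2
    simpa [key] using hf
  · intro h Sh hh hSh
    have key : ∀ n : ℕ, ⟪η n, Sh⟫ = ⟪Φ n, h⟫ := by
      intro n
      have h1 : HasSum (fun m : ℕ => ⟪Φ m, h⟫ * ⟪η n, Φ m⟫) ⟪η n, Sh⟫ := by
        simpa [inner_smul_right] using (innerSL ℂ (η n)).hasSum hSh
      have h2 : HasSum (fun m : ℕ => ⟪Φ m, h⟫ * ⟪η n, Φ m⟫) ⟪Φ n, h⟫ := by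
        have := hasSum_ite_eq n (⟪Φ n, h⟫ : ℂ)
        refine this.congr_fun fun m => ?_
        rw [hbo']
        by_cases hnm : n = m
        · subst hnm; simp
        · simp [hnm, Ne.symm hnm]
      exact h1.unique h2
    simpa [key] using hh
end

section
/- In the same setting, the unique biorthogonal functionals η_n (satisfying ⟨η_n, Φ_m⟩ = δ_{nm}) satisfy η_k = (ε_k!)^{-1/2} (a†)^k η_0 for all k ≥ 0, and b† η_0 = 0, where a† and b† are the adjoints of a and b. -/
/-!
Since `{Φ n}` spans a dense subspace, a vector is determined by its inner products with the `Φ m`.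
Moving `a†` across the inner product turns the lowering relation `a Φ (m + 1) = √ε_{m+1} Φ m` into
`⟪a† η k, Φ m⟫ = √ε_{k+1} δ_{k+1,m}`, i.e. `a† η k = √ε_{k+1} η (k + 1)`: `a†` raises the
biorthogonal sequence. Iterating from `η 0` gives `(a†)^k η 0 = √(ε_k!) η k`, and `√(ε_k!) ≠ 0`
because `0 = ε 0 < ε 1 < ⋯`. Likewise `⟪b† η 0, Φ m⟫ = √ε_{m+1} ⟪η 0, Φ (m + 1)⟫ = 0`.
-/

local notation "⟪" x ", " y "⟫" => @inner ℂ _ _ x y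

open Finset

section InnerProductSpace

variable {𝕜 H : Type*} [RCLike 𝕜] [NormedAddCommGroup H] [InnerProductSpace 𝕜 H]

theorem inner_left_eq_of_inner_right_eq {a ad : H →ₗ[𝕜] H}
    (h : ∀ x y : H, inner 𝕜 (a x) y = inner 𝕜 x (ad y)) (x y : H) :
    inner 𝕜 (ad x) y = inner 𝕜 x (a y) := by
  rw [← inner_conj_symm, ← h, inner_conj_symm]

theorem eq_of_forall_inner_eq_of_dense_span {Φ : ℕ → H}
    (hdense : Dense ((Submodule.span 𝕜 (Set.range Φ) : Submodule 𝕜 H) : Set H)) {x y : H}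
    (h : ∀ m, inner 𝕜 x (Φ m) = inner 𝕜 y (Φ m)) : x = y := by
  refine hdense.eq_of_inner_left 𝕜 fun v hv => ?_
  have hspan : Set.EqOn (innerₛₗ 𝕜 x) (innerₛₗ 𝕜 y) (Submodule.span 𝕜 (Set.range Φ)) :=
    LinearMap.eqOn_span' (by rintro _ ⟨m, rfl⟩; exact h m)
  exact hspan hv

variable {a ad : H →ₗ[𝕜] H} {Φ η : ℕ → H} {ε : ℕ → ℝ}

theorem adjoint_apply_biorthogonal_eq_smul_succ
    (hadj : ∀ x y : H, inner 𝕜 (a x) y = inner 𝕜 x (ad y))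
    (haΦ0 : a (Φ 0) = 0)
    (haΦ : ∀ n : ℕ, 1 ≤ n → a (Φ n) = (Real.sqrt (ε n) : 𝕜) • Φ (n - 1))
    (hbo : ∀ n m : ℕ, inner 𝕜 (η n) (Φ m) = if n = m then (1 : 𝕜) else 0)
    (hdense : Dense ((Submodule.span 𝕜 (Set.range Φ) : Submodule 𝕜 H) : Set H)) (k : ℕ) :
    ad (η k) = (Real.sqrt (ε (k + 1)) : 𝕜) • η (k + 1) := by
  refine eq_of_forall_inner_eq_of_dense_span hdense fun m => ?_
  rw [inner_left_eq_of_inner_right_eq hadj, inner_smul_left, RCLike.conj_ofReal, hbo]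
  rcases m with _ | m
  · simp [haΦ0]
  · by_cases hkm : k = m <;> simp [haΦ (m + 1) (by omega), inner_smul_right, hbo, hkm]

theorem pow_adjoint_apply_biorthogonal_zero
    (hadj : ∀ x y : H, inner 𝕜 (a x) y = inner 𝕜 x (ad y))
    (haΦ0 : a (Φ 0) = 0)
    (haΦ : ∀ n : ℕ, 1 ≤ n → a (Φ n) = (Real.sqrt (ε n) : 𝕜) • Φ (n - 1))
    (hbo : ∀ n m : ℕ, inner 𝕜 (η n) (Φ m) = if n = m then (1 : 𝕜) else 0)
    (hdense : Dense ((Submodule.span 𝕜 (Set.range Φ) : Submodule 𝕜 H) : Set H)) (k : ℕ) :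
    (ad ^ k) (η 0) = (∏ j ∈ range k, (Real.sqrt (ε (j + 1)) : 𝕜)) • η k := by
  induction k with
  | zero => simp
  | succ k ih =>
    rw [pow_succ', Module.End.mul_apply, ih, map_smul,
      adjoint_apply_biorthogonal_eq_smul_succ hadj haΦ0 haΦ hbo hdense, smul_smul, prod_range_succ]

theorem adjoint_apply_biorthogonal_zero_eq_zero_of_raising {b bd : H →ₗ[𝕜] H}
    (hadj : ∀ x y : H, inner 𝕜 (b x) y = inner 𝕜 x (bd y))
    (hbΦ : ∀ n : ℕ, b (Φ n) = (Real.sqrt (ε (n + 1)) : 𝕜) • Φ (n + 1))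
    (hbo : ∀ n m : ℕ, inner 𝕜 (η n) (Φ m) = if n = m then (1 : 𝕜) else 0)
    (hdense : Dense ((Submodule.span 𝕜 (Set.range Φ) : Submodule 𝕜 H) : Set H)) :
    bd (η 0) = 0 := by
  refine eq_of_forall_inner_eq_of_dense_span hdense fun m => ?_
  simp [inner_left_eq_of_inner_right_eq hadj, hbΦ, inner_smul_right, hbo]

end InnerProductSpace

theorem stmt17_general {H : Type*} [NormedAddCommGroup H] [InnerProductSpace ℂ H]
    (a b ad bd : H →ₗ[ℂ] H) (Φ η : ℕ → H) (ε : ℕ → ℝ)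
    (hε0 : ε 0 = 0) (hmono : StrictMono ε)
    (hadja : ∀ x y : H, ⟪a x, y⟫ = ⟪x, ad y⟫)
    (hadjb : ∀ x y : H, ⟪b x, y⟫ = ⟪x, bd y⟫)
    (haΦ0 : a (Φ 0) = 0)
    (haΦ : ∀ n : ℕ, 1 ≤ n → a (Φ n) = (Real.sqrt (ε n) : ℂ) • Φ (n - 1))
    (hbΦ : ∀ n : ℕ, b (Φ n) = (Real.sqrt (ε (n + 1)) : ℂ) • Φ (n + 1))
    (hbo : ∀ n m : ℕ, ⟪η n, Φ m⟫ = if n = m then (1 : ℂ) else 0)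
    (hdense : Dense ((Submodule.span ℂ (Set.range Φ) : Submodule ℂ H) : Set H)) :
    bd (η 0) = 0 ∧
    ∀ k : ℕ, η k =
      ((Real.sqrt (∏ j ∈ Finset.range k, ε (j + 1)) : ℂ))⁻¹ •
        (ad ^ k) (η 0) := by
  have hεpos : ∀ n, 0 < ε (n + 1) := fun n => hε0 ▸ hmono n.succ_pos
  refine ⟨adjoint_apply_biorthogonal_zero_eq_zero_of_raising hadjb hbΦ hbo hdense, fun k => ?_⟩
  have hprod : (∏ j ∈ range k, (Real.sqrt (ε (j + 1)) : ℂ)) =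
      (Real.sqrt (∏ j ∈ range k, ε (j + 1)) : ℂ) := by
    rw [Real.sqrt_prod _ fun j _ => (hεpos j).le, Complex.ofReal_prod]
  have hne : (Real.sqrt (∏ j ∈ range k, ε (j + 1)) : ℂ) ≠ 0 :=
    Complex.ofReal_ne_zero.mpr (Real.sqrt_pos.mpr (prod_pos fun j _ => hεpos j)).ne'
  rw [pow_adjoint_apply_biorthogonal_zero hadja haΦ0 haΦ hbo hdense,
    RCLike.ofReal_eq_complex_ofReal, hprod, inv_smul_smul₀ hne]

/-- The unique biorthogonal sequence `{η n}` of `{Φ n}` satisfies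
`η k = (ε_k!)^{-1/2} (a†)^k η 0` and `b† η 0 = 0`. -/
theorem stmt17 {H : Type*} [NormedAddCommGroup H] [InnerProductSpace ℂ H]
    [CompleteSpace H] (a b ad bd : H →ₗ[ℂ] H) (Φ η : ℕ → H) (ε : ℕ → ℝ)
    (hε0 : ε 0 = 0) (hmono : StrictMono ε)
    (hadja : ∀ x y : H, ⟪a x, y⟫ = ⟪x, ad y⟫)
    (hadjb : ∀ x y : H, ⟪b x, y⟫ = ⟪x, bd y⟫)
    (haΦ0 : a (Φ 0) = 0)
    (haΦ : ∀ n : ℕ, 1 ≤ n → a (Φ n) = (Real.sqrt (ε n) : ℂ) • Φ (n - 1))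
    (hbΦ : ∀ n : ℕ, b (Φ n) = (Real.sqrt (ε (n + 1)) : ℂ) • Φ (n + 1))
    (hbo : ∀ n m : ℕ, ⟪η n, Φ m⟫ = if n = m then (1 : ℂ) else 0)
    (hdense : Dense ((Submodule.span ℂ (Set.range Φ) : Submodule ℂ H) : Set H)) :
    bd (η 0) = 0 ∧
    ∀ k : ℕ, η k =
      ((Real.sqrt (∏ j ∈ Finset.range k, ε (j + 1)) : ℂ))⁻¹ •
        (ad ^ k) (η 0) :=
  stmt17_general a b ad bd Φ η ε hε0 hmono hadja hadjb haΦ0 haΦ hbΦ hbo hdense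
end

section
/- In the same setting, b† acts as a lowering operator on the biorthogonal sequence: b† η_n = √ε_n η_{n-1} for all n ≥ 1, and a† as a raising operator: a† η_n = √ε_{n+1} η_{n+1}. -/
local notation "⟪" x ", " y "⟫" => @inner ℂ _ _ x y

section Biorthogonal

variable {H : Type*} [NormedAddCommGroup H] [InnerProductSpace ℂ H] {ι : Type*}

theorem eq_of_inner_eq_of_dense_span {Φ : ι → H}
    (hdense : Dense ((Submodule.span ℂ (Set.range Φ) : Submodule ℂ H) : Set H))
    {x y : H} (h : ∀ k, ⟪x, Φ k⟫ = ⟪y, Φ k⟫) : x = y := by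
  refine hdense.eq_of_inner_left ℂ fun v hv => ?_
  have hrange : Set.EqOn (innerₛₗ ℂ x) (innerₛₗ ℂ y) (Set.range Φ) := by
    rintro _ ⟨k, rfl⟩
    exact h k
  exact LinearMap.eqOn_span' hrange hv

theorem adjoint_apply_eq_of_dense_span {Φ : ι → H}
    (hdense : Dense ((Submodule.span ℂ (Set.range Φ) : Submodule ℂ H) : Set H))
    {T S : H → H} (hadj : ∀ x y, ⟪T x, y⟫ = ⟪x, S y⟫) {u v : H}
    (h : ∀ k, ⟪u, T (Φ k)⟫ = ⟪v, Φ k⟫) : S u = v := by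
  refine eq_of_inner_eq_of_dense_span hdense fun k => ?_
  rw [← h, ← inner_conj_symm, ← hadj, inner_conj_symm]

end Biorthogonal

theorem stmt18_general {H : Type*} [NormedAddCommGroup H] [InnerProductSpace ℂ H]
    (a b ad bd : H →ₗ[ℂ] H) (Φ η : ℕ → H) (ε : ℕ → ℝ)
    (hadja : ∀ x y : H, ⟪a x, y⟫ = ⟪x, ad y⟫)
    (hadjb : ∀ x y : H, ⟪b x, y⟫ = ⟪x, bd y⟫)
    (haΦ0 : a (Φ 0) = 0)
    (haΦ : ∀ k : ℕ, 1 ≤ k → a (Φ k) = (Real.sqrt (ε k) : ℂ) • Φ (k - 1))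
    (hbΦ : ∀ k : ℕ, b (Φ k) = (Real.sqrt (ε (k + 1)) : ℂ) • Φ (k + 1))
    (hbo : ∀ n m : ℕ, ⟪η n, Φ m⟫ = if n = m then (1 : ℂ) else 0)
    (hdense : Dense ((Submodule.span ℂ (Set.range Φ) : Submodule ℂ H) : Set H)) :
    (∀ n : ℕ, 1 ≤ n → bd (η n) = (Real.sqrt (ε n) : ℂ) • η (n - 1)) ∧
    (∀ n : ℕ, ad (η n) = (Real.sqrt (ε (n + 1)) : ℂ) • η (n + 1)) := by
  constructor
  · intro n hn
    obtain ⟨m, rfl⟩ : ∃ m, n = m + 1 := Nat.exists_eq_add_of_le' hn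
    refine adjoint_apply_eq_of_dense_span hdense hadjb fun k => ?_
    rcases eq_or_ne m k with rfl | hmk
    · simp [hbΦ, hbo]
    · simp [hbΦ, hbo, hmk]
  · intro n
    refine adjoint_apply_eq_of_dense_span hdense hadja fun k => ?_
    rcases k with _ | k
    · simp [haΦ0, hbo]
    · rcases eq_or_ne n k with rfl | hnk
      · simp [haΦ, hbo]
      · simp [haΦ, hbo, hnk]

/-- `b†` lowers and `a†` raises the biorthogonal sequence:
`b† η n = √ε_n η_{n-1}` for `n ≥ 1` and `a† η n = √ε_{n+1} η_{n+1}`. -/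
theorem stmt18 {H : Type*} [NormedAddCommGroup H] [InnerProductSpace ℂ H]
    [CompleteSpace H] (a b ad bd : H →ₗ[ℂ] H) (Φ η : ℕ → H) (ε : ℕ → ℝ)
    (hε0 : ε 0 = 0) (hmono : StrictMono ε)
    (hadja : ∀ x y : H, ⟪a x, y⟫ = ⟪x, ad y⟫)
    (hadjb : ∀ x y : H, ⟪b x, y⟫ = ⟪x, bd y⟫)
    (haΦ0 : a (Φ 0) = 0)
    (haΦ : ∀ k : ℕ, 1 ≤ k → a (Φ k) = (Real.sqrt (ε k) : ℂ) • Φ (k - 1))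
    (hbΦ : ∀ k : ℕ, b (Φ k) = (Real.sqrt (ε (k + 1)) : ℂ) • Φ (k + 1))
    (hbo : ∀ n m : ℕ, ⟪η n, Φ m⟫ = if n = m then (1 : ℂ) else 0)
    (hdense : Dense ((Submodule.span ℂ (Set.range Φ) : Submodule ℂ H) : Set H)) :
    (∀ n : ℕ, 1 ≤ n → bd (η n) = (Real.sqrt (ε n) : ℂ) • η (n - 1)) ∧
    (∀ n : ℕ, ad (η n) = (Real.sqrt (ε (n + 1)) : ℂ) • η (n + 1)) :=
  stmt18_general a b ad bd Φ η ε hadja hadjb haΦ0 haΦ hbΦ hbo hdense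
end
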